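/- Let G be a finite abelian group with a nondegenerate Hermitian bicharacter χ. Then either |G| = |H|² for some subgroup H with H = H', or |G| = 2·|K|² where K is a subgroup of the index-2 subgroup G⁺ = {g : χ(g,g)=1} satisfying K = K' inside G⁺; in particular |G| is either a perfect square or twice a perfect square. -/

import Mathlib

/-!
Values of a bicharacter on a finite group are roots of unity, so a Hermitian one is skew:
`χ g h * χ h g = 1`. Hence `g ↦ χ g g` is a `±1`-valued character, and nondegeneracy gives
`|H^⊥| * |H| = |G|` for every subgroup `H`. If `H ≤ H^⊥` is a maximal isotropic subgroup, then
maximality makes `H` exactly the kernel of `g ↦ χ g g` on `H^⊥`, so `[H^⊥ : H]` is `1` or `2`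
and `|G| = [H^⊥ : H] * |H|^2`.
-/

/-- The annihilator of a set `S ⊆ G` with respect to a bicharacter `χ`. -/
def annihilator {G : Type*} [CommGroup G] (χ : G → G → ℂˣ) (S : Set G) : Set G :=
  {g : G | ∀ h ∈ S, χ h g = 1}

open Subgroup MonoidHom

section Bicharacter

variable {G M : Type*} [CommGroup G] [CommGroup M]

def bicharacter (χ : G → G → M) (hmul₁ : ∀ g₁ g₂ h, χ (g₁ * g₂) h = χ g₁ h * χ g₂ h)
    (hmul₂ : ∀ g h₁ h₂, χ g (h₁ * h₂) = χ g h₁ * χ g h₂) : G →* G →* M :=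
  MonoidHom.mk' (fun g => MonoidHom.mk' (χ g) (hmul₂ g)) fun g₁ g₂ => MonoidHom.ext (hmul₁ g₁ g₂)

variable (B : G →* G →* M)

lemma apply_apply_pow_card_eq_one [Finite G] (g h : G) : B g h ^ Nat.card G = 1 := by
  rw [← map_pow, pow_card_eq_one', map_one]

lemma injective_flip (hskew : ∀ g h, B g h * B h g = 1)
    (hnd : ∀ g, (∀ h, B g h = 1) → g = 1) : Function.Injective B.flip :=
  (injective_iff_map_eq_one _).mpr fun g hg => hnd g fun h => by
    have hhg : B h g = 1 := DFunLike.congr_fun hg h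
    simpa [hhg] using hskew g h

def diagonal (hskew : ∀ g h, B g h * B h g = 1) : G →* M :=
  MonoidHom.mk' (fun g => B g g) fun a b => by
    simp only [map_mul, MonoidHom.mul_apply]
    rw [mul_mul_mul_comm, mul_assoc (B a a), ← mul_assoc (B a b), hskew, one_mul]

lemma diagonal_apply_sq (hskew : ∀ g h, B g h * B h g = 1) (g : G) :
    diagonal B hskew g ^ 2 = 1 :=
  (sq _).trans (hskew g g)

end Bicharacter

lemma apply_mul_apply_swap_eq_one_of_conj {G : Type*} [CommGroup G] [Finite G]
    (B : G →* G →* ℂˣ) (hB : ∀ g h, (B g h : ℂ) = starRingEnd ℂ (B h g)) (g h : G) :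
    B g h * B h g = 1 := by
  have hroot : B h g ∈ rootsOfUnity (Nat.card G) ℂ :=
    (mem_rootsOfUnity _ _).mpr (apply_apply_pow_card_eq_one B h g)
  rw [mul_eq_one_iff_eq_inv, Units.ext_iff, hB, Complex.conj_rootsOfUnity hroot]

lemma relIndex_ker_dvd_two {G : Type*} [Group G] (f : G →* ℂˣ) (hf : ∀ g, f g ^ 2 = 1)
    (K : Subgroup G) : f.ker.relIndex K ∣ 2 := by
  rw [relIndex_ker, ← Complex.card_rootsOfUnity 2]
  exact card_dvd_of_le (map_le_iff_le_comap.mpr fun g _ => (mem_rootsOfUnity _ _).mpr (hf g))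

section Annihilator

variable {G M : Type*} [CommGroup G] [CommGroup M] (B : G →* G →* M)

def annihilatorSubgroup (H : Subgroup G) : Subgroup G :=
  (domRestrictHom H M).ker.comap B.flip

def IsIsotropic (H : Subgroup G) : Prop := H ≤ annihilatorSubgroup B H

variable {B}

lemma mem_annihilatorSubgroup {H : Subgroup G} {g : G} :
    g ∈ annihilatorSubgroup B H ↔ ∀ h ∈ H, B h g = 1 := by
  simp [annihilatorSubgroup, MonoidHom.ext_iff]

lemma exists_maximal_isIsotropic [Finite G] : ∃ H, Maximal (IsIsotropic B) H :=
  Set.Finite.exists_maximal (Set.toFinite {H | IsIsotropic B H})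
    ⟨⊥, show IsIsotropic B ⊥ from bot_le⟩

lemma IsIsotropic.sup_zpowers (hskew : ∀ g h, B g h * B h g = 1) {H : Subgroup G}
    (hH : IsIsotropic B H) {a : G} (ha : a ∈ annihilatorSubgroup B H) (haa : B a a = 1) :
    IsIsotropic B (H ⊔ zpowers a) := by
  intro x hx
  rw [mem_annihilatorSubgroup]
  intro y hy
  obtain ⟨h₁, hh₁, _, ⟨m, rfl⟩, rfl⟩ := mem_sup.mp hx
  obtain ⟨h₂, hh₂, _, ⟨n, rfl⟩, rfl⟩ := mem_sup.mp hy
  have hHa : ∀ h ∈ H, B h a = 1 := mem_annihilatorSubgroup.mp ha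
  have haH : ∀ h ∈ H, B a h = 1 := fun h hh => by simpa [hHa h hh] using hskew a h
  simp [mem_annihilatorSubgroup.mp (hH hh₁) h₂ hh₂, hHa h₂ hh₂, haH h₁ hh₁, haa]

lemma Maximal.mem_of_mem_annihilatorSubgroup (hskew : ∀ g h, B g h * B h g = 1)
    {H : Subgroup G} (hH : Maximal (IsIsotropic B) H) {a : G}
    (ha : a ∈ annihilatorSubgroup B H) (haa : B a a = 1) : a ∈ H :=
  (hH.eq_of_le (hH.prop.sup_zpowers hskew ha haa) le_sup_left).symm ▸
    mem_sup_right (mem_zpowers a)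

lemma Maximal.annihilatorSubgroup_inf_ker_diagonal (hskew : ∀ g h, B g h * B h g = 1)
    {H : Subgroup G} (hH : Maximal (IsIsotropic B) H) :
    annihilatorSubgroup B H ⊓ (diagonal B hskew).ker = H :=
  le_antisymm (fun _ ⟨ha, haa⟩ => hH.mem_of_mem_annihilatorSubgroup hskew ha haa)
    (le_inf hH.prop fun h hh => mem_annihilatorSubgroup.mp (hH.prop hh) h hh)

end Annihilator

section ComplexValued

variable {G : Type*} [CommGroup G] {B : G →* G →* ℂˣ}

lemma coe_annihilatorSubgroup (H : Subgroup G) :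
    (annihilatorSubgroup B H : Set G) = annihilator (fun g h => B g h) H :=
  Set.ext fun _ => mem_annihilatorSubgroup

-- `g ↦ B · g` is a bijection onto the dual of `G`, so the annihilator of `H` is the kernel of a
-- surjection onto the dual of `H`, which has `|H|` elements.
theorem card_annihilatorSubgroup_mul_card [Finite G] (hB : Function.Injective B.flip)
    (H : Subgroup G) : Nat.card (annihilatorSubgroup B H) * Nat.card H = Nat.card G := by
  have hflip : Function.Surjective B.flip :=
    ((Nat.bijective_iff_injective_and_card _).mpr
      ⟨hB, (CommGroup.card_monoidHom_of_hasEnoughRootsOfUnity G ℂ).symm⟩).2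
  have hsurj : Function.Surjective ((domRestrictHom H ℂˣ).comp B.flip) :=
    (domRestrict_surjective ℂ H).comp hflip
  rw [annihilatorSubgroup, comap_ker, ← CommGroup.card_monoidHom_of_hasEnoughRootsOfUnity H ℂ,
    ← card_top (G := H →* ℂˣ), ← range_eq_top.mpr hsurj, ← index_ker, card_mul_index]

lemma Maximal.relIndex_annihilatorSubgroup_dvd_two (hskew : ∀ g h, B g h * B h g = 1)
    {H : Subgroup G} (hH : Maximal (IsIsotropic B) H) :
    H.relIndex (annihilatorSubgroup B H) ∣ 2 := by
  nth_rw 1 [← hH.annihilatorSubgroup_inf_ker_diagonal hskew]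
  rw [inf_relIndex_left]
  exact relIndex_ker_dvd_two _ (diagonal_apply_sq B hskew) _

end ComplexValued

/-- For a finite abelian group `G` with a nondegenerate Hermitian
bicharacter `χ`, either `|G| = |H|²` for some subgroup `H = H'`, or
`|G| = 2·|K|²` for some subgroup `K` of `G⁺ = {g : χ(g,g)=1}` equal to its
annihilator inside `G⁺`; in particular `|G|` is a square or twice a square. -/
theorem card_square_or_twice_square
    (G : Type*) [CommGroup G] [Fintype G] (χ : G → G → ℂˣ)
    (hmul₁ : ∀ g₁ g₂ h : G, χ (g₁ * g₂) h = χ g₁ h * χ g₂ h)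
    (hmul₂ : ∀ g h₁ h₂ : G, χ g (h₁ * h₂) = χ g h₁ * χ g h₂)
    (hnd : ∀ g : G, (∀ h : G, χ g h = 1) → g = 1)
    (hherm : ∀ g h : G, (χ g h : ℂ) = (starRingEnd ℂ) ((χ h g : ℂ))) :
    ((∃ H : Subgroup G, (H : Set G) = annihilator χ (H : Set G) ∧
        Nat.card G = Nat.card H ^ 2) ∨
      (∃ K : Subgroup G, (K : Set G) ⊆ {g : G | (χ g g : ℂ) = 1} ∧
        (K : Set G) = annihilator χ (K : Set G) ∩ {g : G | (χ g g : ℂ) = 1} ∧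
        Nat.card G = 2 * Nat.card K ^ 2)) ∧
    (∃ m : ℕ, Nat.card G = m ^ 2 ∨ Nat.card G = 2 * m ^ 2) := by
  set B := bicharacter χ hmul₁ hmul₂
  have hskew : ∀ g h, B g h * B h g = 1 := apply_mul_apply_swap_eq_one_of_conj B hherm
  obtain ⟨H, hH⟩ := exists_maximal_isIsotropic (B := B)
  have hcard : Nat.card G = H.relIndex (annihilatorSubgroup B H) * Nat.card H ^ 2 := by
    rw [← card_annihilatorSubgroup_mul_card (injective_flip B hskew hnd) H,
      ← relIndex_bot_left, ← relIndex_mul_relIndex ⊥ H _ bot_le hH.prop, relIndex_bot_left]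
    ring
  have hann : (annihilatorSubgroup B H : Set G) = annihilator χ H := coe_annihilatorSubgroup H
  have hplus : ((diagonal B hskew).ker : Set G) = {g | (χ g g : ℂ) = 1} :=
    Set.ext fun _ => Units.val_eq_one.symm
  rcases (Nat.dvd_prime Nat.prime_two).mp (hH.relIndex_annihilatorSubgroup_dvd_two hskew) with
    hone | htwo
  · rw [hone, one_mul] at hcard
    refine ⟨.inl ⟨H, ?_, hcard⟩, Nat.card H, .inl hcard⟩
    rw [← hann, ← le_antisymm hH.prop (relIndex_eq_one.mp hone)]
  · rw [htwo] at hcard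
    have hH_eq : (H : Set G) = annihilator χ H ∩ {g | (χ g g : ℂ) = 1} := by
      rw [← hann, ← hplus, ← coe_inf, hH.annihilatorSubgroup_inf_ker_diagonal hskew]
    exact ⟨.inr ⟨H, hH_eq ▸ Set.inter_subset_right, hH_eq, hcard⟩, Nat.card H, .inr hcard⟩
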